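/- arXiv:math/0605243 — 7 statements merged into one kernel-verified Lean document; each statement's English description precedes it below -/
import Mathlib

section
/- Let A, B be positive semi-definite operators on a finite-dimensional real inner product space V and c ∈ V. If (u₁, λ₁) and (u₂, λ₂) both satisfy the quasi-projection equations u − Aλ = Ac and (A+B)λ = (B−A)c, then u₁ = u₂, Aλ₁ = Aλ₂, and Bλ₁ = Bλ₂. -/
/-! The difference of two solutions lies in the kernel of `A + B`. For positive semi-definite
operators `⟪(A + B) x, x⟫ = ⟪A x, x⟫ + ⟪B x, x⟫` is a sum of nonnegative terms, and a positive
operator kills every `x` with `⟪T x, x⟫ = 0`; so `ker (A + B) = ker A ∩ ker B`. -/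

open scoped RealInnerProductSpace

namespace LinearMap

variable {E : Type*} [NormedAddCommGroup E] [InnerProductSpace ℝ E]

theorem isPositive_of_inner_apply_nonneg {T : E →ₗ[ℝ] E} (hT : T.IsSymmetric)
    (hTnonneg : ∀ x : E, 0 ≤ ⟪x, T x⟫) : T.IsPositive :=
  (isPositive_iff T).mpr ⟨hT, fun x => real_inner_comm x (T x) ▸ hTnonneg x⟩

/-- Expanding `0 ≤ ⟪T (x + t • T x), x + t • T x⟫` gives a quadratic in `t` with no constant
term, whose linear coefficient `2 ‖T x‖²` must therefore vanish. -/
theorem IsPositive.apply_eq_zero_of_inner_eq_zero {T : E →ₗ[ℝ] E} (hT : T.IsPositive) {x : E}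
    (hx : ⟪T x, x⟫ = 0) : T x = 0 := by
  have hquad : ∀ t : ℝ, 0 ≤ ⟪T (T x), T x⟫ * (t * t) + 2 * ‖T x‖ ^ 2 * t + 0 := fun t => by
    have h := hT.inner_nonneg_left (x + t • T x)
    have hsymm : ⟪T (T x), x⟫ = ⟪T x, T x⟫ := hT.isSymmetric (T x) x
    simp only [map_add, map_smul, inner_add_left, inner_add_right, real_inner_smul_left,
      real_inner_smul_right, hx, hsymm, real_inner_self_eq_norm_sq] at h
    linarith
  have hdiscr : (2 * ‖T x‖ ^ 2) ^ 2 ≤ 0 := by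
    simpa only [discrim, mul_zero, sub_zero] using discrim_le_zero hquad
  simpa using le_antisymm hdiscr (sq_nonneg _)

theorem IsPositive.apply_eq_zero_of_add_apply_eq_zero {T S : E →ₗ[ℝ] E} (hT : T.IsPositive)
    (hS : S.IsPositive) {x : E} (hx : (T + S) x = 0) : T x = 0 ∧ S x = 0 := by
  have hsum : ⟪T x, x⟫ + ⟪S x, x⟫ = 0 := by
    rw [← inner_add_left, ← add_apply, hx, inner_zero_left]
  have hTx := hT.inner_nonneg_left x
  have hSx := hS.inner_nonneg_left x
  exact ⟨hT.apply_eq_zero_of_inner_eq_zero (by linarith),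
    hS.apply_eq_zero_of_inner_eq_zero (by linarith)⟩

end LinearMap

theorem quasiProjection_uniqueness_general {V : Type*} [NormedAddCommGroup V] [InnerProductSpace ℝ V]
    (A B : V →ₗ[ℝ] V)
    (hA : A.IsSymmetric) (hB : B.IsSymmetric)
    (hApsd : ∀ x : V, 0 ≤ (inner ℝ x (A x) : ℝ)) (hBpsd : ∀ x : V, 0 ≤ (inner ℝ x (B x) : ℝ))
    (c u₁ u₂ l₁ l₂ : V)
    (hq1₁ : u₁ - A l₁ = A c) (hq2₁ : (A + B) l₁ = (B - A) c)
    (hq1₂ : u₂ - A l₂ = A c) (hq2₂ : (A + B) l₂ = (B - A) c) :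
    u₁ = u₂ ∧ A l₁ = A l₂ ∧ B l₁ = B l₂ := by
  have hkernel : (A + B) (l₁ - l₂) = 0 := by rw [map_sub, hq2₁, hq2₂, sub_self]
  have hApos := LinearMap.isPositive_of_inner_apply_nonneg hA hApsd
  have hBpos := LinearMap.isPositive_of_inner_apply_nonneg hB hBpsd
  obtain ⟨hAd, hBd⟩ := hApos.apply_eq_zero_of_add_apply_eq_zero hBpos hkernel
  have hAl : A l₁ = A l₂ := sub_eq_zero.mp (by rwa [map_sub] at hAd)
  have hBl : B l₁ = B l₂ := sub_eq_zero.mp (by rwa [map_sub] at hBd)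
  refine ⟨?_, hAl, hBl⟩
  rw [sub_eq_iff_eq_add.mp hq1₁, sub_eq_iff_eq_add.mp hq1₂, hAl]

theorem quasiProjection_uniqueness {V : Type*} [NormedAddCommGroup V] [InnerProductSpace ℝ V]
    [FiniteDimensional ℝ V] (A B : V →ₗ[ℝ] V)
    (hA : A.IsSymmetric) (hB : B.IsSymmetric)
    (hApsd : ∀ x : V, 0 ≤ (inner ℝ x (A x) : ℝ)) (hBpsd : ∀ x : V, 0 ≤ (inner ℝ x (B x) : ℝ))
    (c u₁ u₂ l₁ l₂ : V)
    (hq1₁ : u₁ - A l₁ = A c) (hq2₁ : (A + B) l₁ = (B - A) c)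
    (hq1₂ : u₂ - A l₂ = A c) (hq2₂ : (A + B) l₂ = (B - A) c) :
    u₁ = u₂ ∧ A l₁ = A l₂ ∧ B l₁ = B l₂ :=
  quasiProjection_uniqueness_general A B hA hB hApsd hBpsd c u₁ u₂ l₁ l₂ hq1₁ hq2₁ hq1₂ hq2₂
end

section
/- If A and B are positive semi-definite operators on a finite-dimensional real inner product space, then the parallel sum operator 2A(A+B)⁺B is positive semi-definite. -/
/-! With `S = A + B`, positivity of `A` and `B` gives `ker S ≤ ker B`, so `B x` lies in
`(ker S)ᗮ`, where `S G` acts as the identity. Hence `y = G (B x)` solves `A y + B y = B x`,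
i.e. `A y = B (x - y)`, and then `⟪x, A y⟫ = ⟪x - y, B (x - y)⟫ + ⟪y, A y⟫ ≥ 0`. -/

/-- `G` is the Moore-Penrose pseudo-inverse of `L` (Penrose conditions;
adjoint-symmetry of `L ∘ G` and `G ∘ L` expressed via `IsSymmetric`). -/
def IsMoorePenrose {V : Type*} [NormedAddCommGroup V] [InnerProductSpace ℝ V]
    (L G : V →ₗ[ℝ] V) : Prop :=
  L ∘ₗ (G ∘ₗ L) = L ∧ G ∘ₗ (L ∘ₗ G) = G ∧
  (L ∘ₗ G).IsSymmetric ∧ (G ∘ₗ L).IsSymmetric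

section

open LinearMap
open scoped RealInnerProductSpace

variable {V : Type*} [NormedAddCommGroup V] [InnerProductSpace ℝ V]

theorem LinearMap.IsSymmetric.apply_eq_zero_of_inner_map_self_eq_zero {T : V →ₗ[ℝ] V}
    (hT : T.IsSymmetric) (hT₀ : ∀ x, 0 ≤ ⟪x, T x⟫) {x : V} (hx : ⟪x, T x⟫ = 0) :
    T x = 0 := by
  -- Cauchy–Schwarz for the positive semidefinite form `(y, z) ↦ ⟪y, T z⟫`
  let β : LinearMap.BilinForm ℝ V := (innerₗ V).compl₂ T
  have hβ : LinearMap.IsSymm β := ⟨fun y z => by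
    simp only [β, compl₂_apply, innerₗ_apply_apply, RingHom.id_apply]
    rw [← hT, real_inner_comm]⟩
  have hβx : β x = 0 := (β.apply_apply_same_eq_zero_iff hT₀ hβ).1 hx
  refine (inner_self_eq_zero (𝕜 := ℝ)).1 ?_
  rw [hT]
  exact LinearMap.congr_fun hβx (T x)

theorem LinearMap.ker_add_le_ker_right {A B : V →ₗ[ℝ] V} (hA₀ : ∀ x, 0 ≤ ⟪x, A x⟫)
    (hB : B.IsSymmetric) (hB₀ : ∀ x, 0 ≤ ⟪x, B x⟫) : ker (A + B) ≤ ker B := by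
  intro x hx
  have hsum : ⟪x, A x⟫ + ⟪x, B x⟫ = 0 := by
    rw [← inner_add_right, ← LinearMap.add_apply, mem_ker.1 hx, inner_zero_right]
  exact hB.apply_eq_zero_of_inner_map_self_eq_zero hB₀ (by linarith [hA₀ x, hB₀ x])

theorem IsMoorePenrose.apply_apply_of_mem_orthogonal_ker {L G : V →ₗ[ℝ] V}
    (hG : IsMoorePenrose L G) (hL : L.IsSymmetric) {w : V} (hw : w ∈ (ker L)ᗮ) :
    L (G w) = w := by
  obtain ⟨hLGL, -, hLG, -⟩ := hG
  set z := w - L (G w)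
  have hz_perp : ∀ u, ⟪z, L u⟫ = 0 := fun u => by
    have hLGLu : L (G (L u)) = L u := LinearMap.congr_fun hLGL u
    have hsymm := hLG w (L u)
    rw [comp_apply, comp_apply, hLGLu] at hsymm
    rw [inner_sub_left, hsymm, sub_self]
  have hz_ker : L z = 0 := inner_self_eq_zero.1 (by rw [hL]; exact hz_perp (L z))
  have hz : ⟪z, z⟫ = 0 := by rw [inner_sub_right, hw z hz_ker, hz_perp, sub_zero]
  exact (sub_eq_zero.1 (inner_self_eq_zero.1 hz)).symm

theorem inner_apply_nonneg_of_add_apply_eq {A B : V →ₗ[ℝ] V} (hA₀ : ∀ x, 0 ≤ ⟪x, A x⟫)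
    (hB₀ : ∀ x, 0 ≤ ⟪x, B x⟫) {x y : V} (h : (A + B) y = B x) : 0 ≤ ⟪x, A y⟫ := by
  have hAy : A y = B (x - y) := by
    rw [map_sub, ← h, LinearMap.add_apply]
    abel
  have hsplit : ⟪x, A y⟫ = ⟪x - y, B (x - y)⟫ + ⟪y, A y⟫ := by
    rw [← hAy, ← inner_add_left, sub_add_cancel]
  linarith [hB₀ (x - y), hA₀ y]

end

theorem parallelSum_psd_general {V : Type*} [NormedAddCommGroup V] [InnerProductSpace ℝ V]
    (A B : V →ₗ[ℝ] V)
    (hA : A.IsSymmetric) (hB : B.IsSymmetric)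
    (hApsd : ∀ x : V, 0 ≤ (inner ℝ x (A x) : ℝ)) (hBpsd : ∀ x : V, 0 ≤ (inner ℝ x (B x) : ℝ))
    (G : V →ₗ[ℝ] V) (hG : IsMoorePenrose (A + B) G) :
    ∀ x : V, 0 ≤ (inner ℝ x (((2 : ℝ) • (A ∘ₗ (G ∘ₗ B))) x) : ℝ) := by
  intro x
  have hBx : B x ∈ (LinearMap.ker (A + B))ᗮ := fun z hz => by
    rw [← hB, LinearMap.ker_add_le_ker_right hApsd hB hBpsd hz, inner_zero_left]
  have hy : (A + B) (G (B x)) = B x := hG.apply_apply_of_mem_orthogonal_ker (hA.add hB) hBx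
  have hnonneg := inner_apply_nonneg_of_add_apply_eq hApsd hBpsd hy
  simp only [LinearMap.smul_apply, LinearMap.comp_apply, real_inner_smul_right]
  positivity

theorem parallelSum_psd {V : Type*} [NormedAddCommGroup V] [InnerProductSpace ℝ V]
    [FiniteDimensional ℝ V] (A B : V →ₗ[ℝ] V)
    (hA : A.IsSymmetric) (hB : B.IsSymmetric)
    (hApsd : ∀ x : V, 0 ≤ (inner ℝ x (A x) : ℝ)) (hBpsd : ∀ x : V, 0 ≤ (inner ℝ x (B x) : ℝ))
    (G : V →ₗ[ℝ] V) (hG : IsMoorePenrose (A + B) G) :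
    ∀ x : V, 0 ≤ (inner ℝ x (((2 : ℝ) • (A ∘ₗ (G ∘ₗ B))) x) : ℝ) :=
  parallelSum_psd_general A B hA hB hApsd hBpsd G hG
end

section
/- If A and B are positive semi-definite operators on a finite-dimensional real inner product space, then Kernel(A(A+B)⁺B) = Kernel(A) + Kernel(B). -/
open scoped InnerProductSpace

namespace LinearMap

section Algebra

variable {R M : Type*} [Ring R] [AddCommGroup M] [Module R M] {A B G L : M →ₗ[R] M}

lemma apply_apply_eq_of_mem_range (h : L ∘ₗ (G ∘ₗ L) = L) {y : M} (hy : y ∈ range L) :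
    L (G y) = y := by
  obtain ⟨w, rfl⟩ := hy
  exact congr($h w)

lemma ker_comp_comp_le_sup (hG : (A + B) ∘ₗ (G ∘ₗ (A + B)) = A + B)
    (hB : range B ≤ range (A + B)) : ker (A ∘ₗ (G ∘ₗ B)) ≤ ker A ⊔ ker B := by
  intro x hx
  have hAy : A (G (B x)) = 0 := hx
  have hBy : B (G (B x)) = B x := by
    have h := apply_apply_eq_of_mem_range hG (hB ⟨x, rfl⟩)
    rwa [add_apply, hAy, zero_add] at h
  refine Submodule.mem_sup.2 ⟨G (B x), hAy, x - G (B x), ?_, add_sub_cancel _ _⟩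
  rw [mem_ker, map_sub, hBy, sub_self]

lemma ker_le_ker_comp_comp (hG : (A + B) ∘ₗ (G ∘ₗ (A + B)) = A + B)
    (hA : ker (A + B) ≤ ker A) : ker A ≤ ker (A ∘ₗ (G ∘ₗ B)) := by
  intro x hx
  have hAx : A x = 0 := hx
  have hBx : B x = (A + B) x := by simp [hAx]
  have hdiff : G ((A + B) x) - x ∈ ker (A + B) := by
    rw [mem_ker, map_sub, apply_apply_eq_of_mem_range hG ⟨x, rfl⟩, sub_self]
  have h := hA hdiff
  rwa [mem_ker, map_sub, hAx, sub_zero, ← hBx] at h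

end Algebra

variable {𝕜 E : Type*} [RCLike 𝕜] [NormedAddCommGroup E] [InnerProductSpace 𝕜 E]

open RCLike

lemma IsPositive.apply_eq_zero_of_re_inner_eq_zero {T : E →ₗ[𝕜] E} (hT : T.IsPositive) {x : E}
    (hx : re ⟪T x, x⟫_𝕜 = 0) : T x = 0 := by
  have hquad : ∀ t : ℝ, 0 ≤ re ⟪T (T x), T x⟫_𝕜 * (t * t) + 2 * ‖T x‖ ^ 2 * t + 0 := by
    intro t
    have h := hT.re_inner_nonneg_left (x + (t : 𝕜) • T x)
    have hsym : ⟪T (T x), x⟫_𝕜 = ⟪T x, T x⟫_𝕜 := hT.isSymmetric _ _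
    simp only [map_add, map_smul, inner_add_left, inner_add_right, inner_smul_left,
      inner_smul_right, hsym, inner_self_eq_norm_sq_to_K, hx] at h
    simp only [conj_ofReal, ← ofReal_pow, mul_add, ← mul_assoc, ← ofReal_mul, map_add,
      re_ofReal_mul, ofReal_re] at h
    linarith
  have hdisc := discrim_le_zero hquad
  rw [discrim, mul_zero, sub_zero] at hdisc
  have h0 : 2 * ‖T x‖ ^ 2 = 0 :=
    pow_eq_zero_iff two_ne_zero |>.1 (le_antisymm hdisc (sq_nonneg _))
  simpa using h0

lemma IsPositive.ker_add {S T : E →ₗ[𝕜] E} (hS : S.IsPositive) (hT : T.IsPositive) :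
    ker (S + T) = ker S ⊓ ker T := by
  refine le_antisymm (fun x hx ↦ ?_) (fun x ⟨hSx, hTx⟩ ↦ by simp_all)
  have hsum : re ⟪S x, x⟫_𝕜 + re ⟪T x, x⟫_𝕜 = 0 := by
    rw [← map_add, ← inner_add_left, ← add_apply, mem_ker.1 hx, inner_zero_left, map_zero]
  have hSx := hS.re_inner_nonneg_left x
  have hTx := hT.re_inner_nonneg_left x
  exact ⟨hS.apply_eq_zero_of_re_inner_eq_zero (by linarith),
    hT.apply_eq_zero_of_re_inner_eq_zero (by linarith)⟩

lemma IsSymmetric.range_le_range_iff [FiniteDimensional 𝕜 E] {S T : E →ₗ[𝕜] E}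
    (hS : S.IsSymmetric) (hT : T.IsSymmetric) : range T ≤ range S ↔ ker S ≤ ker T := by
  rw [← Submodule.orthogonal_le_orthogonal_iff, hS.orthogonal_range, hT.orthogonal_range]

end LinearMap

open LinearMap in
theorem parallelSum_ker {V : Type*} [NormedAddCommGroup V] [InnerProductSpace ℝ V]
    [FiniteDimensional ℝ V] (A B : V →ₗ[ℝ] V)
    (hA : A.IsSymmetric) (hB : B.IsSymmetric)
    (hApsd : ∀ x : V, 0 ≤ (inner ℝ x (A x) : ℝ)) (hBpsd : ∀ x : V, 0 ≤ (inner ℝ x (B x) : ℝ))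
    (G : V →ₗ[ℝ] V) (hG : IsMoorePenrose (A + B) G) :
    LinearMap.ker (A ∘ₗ (G ∘ₗ B)) = LinearMap.ker A ⊔ LinearMap.ker B := by
  have hApos : A.IsPositive :=
    (isPositive_iff A).2 ⟨hA, fun x ↦ real_inner_comm x (A x) ▸ hApsd x⟩
  have hBpos : B.IsPositive :=
    (isPositive_iff B).2 ⟨hB, fun x ↦ real_inner_comm x (B x) ▸ hBpsd x⟩
  have hker := hApos.ker_add hBpos
  have hrange : range B ≤ range (A + B) :=
    (hApos.add hBpos).isSymmetric.range_le_range_iff hB |>.2 (hker ▸ inf_le_right)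
  exact le_antisymm (ker_comp_comp_le_sup hG.1 hrange)
    (sup_le (ker_le_ker_comp_comp hG.1 (hker ▸ inf_le_left)) (ker_le_ker_comp B (A ∘ₗ G)))
end

section
/- Let P and Q be orthogonal projections on a finite-dimensional real inner product space W. Then the operator !(P,Q) := 2P(P+Q)⁺Q is the orthogonal projection of W onto Range(P) ∩ Range(Q). -/
/-!
Write `S = P + Q` and `G = S⁺`. As `S` is symmetric, `G` is symmetric and commutes with `S`.
Positivity of `P` gives `ker S ≤ ker Q`, and `S G S = S` puts `x - G S x` in `ker S`, so
`Q G S = Q`; taking adjoints, `G S Q = S G Q = Q`. Expanding `S = P + Q` in both identities yields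
`P G Q = Q G P`. Hence `T = 2 P G Q` is symmetric with range in `range P ⊓ range Q`. On that
intersection `S` acts as `2`, so `G` acts as `1/2` and `T` as the identity. A symmetric operator
with these two properties is the orthogonal projection.
-/

section Operators

open LinearMap
open scoped InnerProductSpace

section RCLike

variable {𝕜 E : Type*} [RCLike 𝕜] [NormedAddCommGroup E] [InnerProductSpace 𝕜 E]

theorem LinearMap.IsSymmetric.comp_eq_right_iff_comp_eq_left {A B : E →ₗ[𝕜] E}
    (hA : A.IsSymmetric) (hB : B.IsSymmetric) : A ∘ₗ B = B ↔ B ∘ₗ A = B := by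
  constructor <;> intro h <;> ext x <;> refine ext_inner_right 𝕜 fun y => ?_
  · rw [comp_apply, hB, hA, ← comp_apply A, h, hB]
  · rw [comp_apply, hA, hB, ← comp_apply B, h, hB]

theorem LinearMap.IsSymmetricProjection.ker_add_le_ker {P Q : E →ₗ[𝕜] E}
    (hQ : Q.IsSymmetricProjection) (hP : P.IsPositive) : ker (P + Q) ≤ ker Q := by
  intro x hx
  have hQx : RCLike.re ⟪Q x, x⟫_𝕜 = ‖Q x‖ ^ 2 := by
    have hQQx : Q (Q x) = Q x := LinearMap.congr_fun hQ.isIdempotentElem.eq x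
    conv_lhs => rw [← hQQx, hQ.isSymmetric, inner_self_eq_norm_sq]
  have hsum : RCLike.re ⟪P x, x⟫_𝕜 + RCLike.re ⟪Q x, x⟫_𝕜 = 0 := by
    rw [← map_add, ← inner_add_left, ← add_apply, mem_ker.mp hx, inner_zero_left, map_zero]
  have hPx := hP.re_inner_nonneg_left x
  rw [mem_ker, ← norm_eq_zero]
  nlinarith [norm_nonneg (Q x)]

theorem Submodule.eq_starProjection_of_isSymmetric {T : E →ₗ[𝕜] E} (hT : T.IsSymmetric)
    {K : Submodule 𝕜 E} [K.HasOrthogonalProjection] (hrange : ∀ w, T w ∈ K)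
    (hfix : ∀ m ∈ K, T m = m) (w : E) : T w = K.starProjection w :=
  (eq_starProjection_of_mem_of_inner_eq_zero (hrange w) fun m hm => by
    rw [inner_sub_left, hT, hfix m hm, sub_self]).symm

end RCLike

variable {E : Type*} [NormedAddCommGroup E] [InnerProductSpace ℝ E]

namespace IsMoorePenrose

variable {L G : E →ₗ[ℝ] E}

theorem comp_comm (hG : IsMoorePenrose L G) (hL : L.IsSymmetric) : L ∘ₗ G = G ∘ₗ L := by
  obtain ⟨hLGL, -, hLG, hGL⟩ := hG
  have hleft : (G ∘ₗ L) ∘ₗ L = L := (hGL.comp_eq_right_iff_comp_eq_left hL).mpr hLGL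
  have hright : L ∘ₗ (L ∘ₗ G) = L := (hLG.comp_eq_right_iff_comp_eq_left hL).mp hLGL
  calc L ∘ₗ G = ((G ∘ₗ L) ∘ₗ L) ∘ₗ G := by rw [hleft]
    _ = G ∘ₗ (L ∘ₗ (L ∘ₗ G)) := rfl
    _ = G ∘ₗ L := by rw [hright]

theorem isSymmetric (hG : IsMoorePenrose L G) (hL : L.IsSymmetric) : G.IsSymmetric := by
  have hcomm x : L (G x) = G (L x) := LinearMap.congr_fun (hG.comp_comm hL) x
  have hGLG x : G (L (G x)) = G x := LinearMap.congr_fun hG.2.1 x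
  intro x y
  calc ⟪G x, y⟫_ℝ = ⟪G (L (G x)), y⟫_ℝ := by rw [hGLG]
    _ = ⟪G x, G (L y)⟫_ℝ := hG.2.2.2 (G x) y
    _ = ⟪L (G x), G y⟫_ℝ := by rw [← hcomm, hL]
    _ = ⟪x, L (G (G y))⟫_ℝ := hG.2.2.1 x (G y)
    _ = ⟪x, G y⟫_ℝ := by rw [hcomm, hGLG]

end IsMoorePenrose

section ParallelSum

variable {P Q G : E →ₗ[ℝ] E} (hP : P.IsSymmetricProjection) (hQ : Q.IsSymmetricProjection)
  (hG : IsMoorePenrose (P + Q) G)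
include hP hQ hG

theorem comp_pinv_comp_add_eq_right : Q ∘ₗ G ∘ₗ (P + Q) = Q := by
  ext x
  have hx : x - G ((P + Q) x) ∈ ker (P + Q) := by
    rw [mem_ker, map_sub, ← comp_apply G, ← comp_apply (P + Q), hG.1, sub_self]
  have := hQ.ker_add_le_ker hP.isPositive hx
  rwa [mem_ker, map_sub, sub_eq_zero, eq_comm] at this

theorem pinv_comp_add_comp_eq_right : G ∘ₗ (P + Q) ∘ₗ Q = Q :=
  (hG.2.2.2.comp_eq_right_iff_comp_eq_left hQ.isSymmetric).mpr
    (comp_pinv_comp_add_eq_right hP hQ hG)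

theorem comp_pinv_comp_comm : P ∘ₗ G ∘ₗ Q = Q ∘ₗ G ∘ₗ P := by
  have hS : (P + Q) ∘ₗ G ∘ₗ Q = Q := by
    rw [← comp_assoc, hG.comp_comm (hP.isSymmetric.add hQ.isSymmetric)]
    exact pinv_comp_add_comp_eq_right hP hQ hG
  have hS' := comp_pinv_comp_add_eq_right hP hQ hG
  rw [add_comp] at hS
  rw [comp_add, comp_add] at hS'
  exact add_right_cancel (hS.trans hS'.symm)

theorem isSymmetric_comp_pinv_comp : (P ∘ₗ G ∘ₗ Q).IsSymmetric := fun x y => by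
  rw [comp_apply, comp_apply, hP.isSymmetric, hG.isSymmetric (hP.isSymmetric.add hQ.isSymmetric),
    hQ.isSymmetric, ← comp_apply G, ← comp_apply Q, ← comp_pinv_comp_comm hP hQ hG]

theorem comp_pinv_comp_apply_mem_inf (v : E) : P (G (Q v)) ∈ range P ⊓ range Q := by
  refine Submodule.mem_inf.mpr ⟨mem_range_self P _, ?_⟩
  rw [← comp_apply G, ← comp_apply P, comp_pinv_comp_comm hP hQ hG]
  exact mem_range_self Q _

theorem two_smul_comp_pinv_comp_apply_of_mem_inf {m : E} (hm : m ∈ range P ⊓ range Q) :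
    (2 : ℝ) • P (G (Q m)) = m := by
  obtain ⟨hPm, hQm⟩ := Submodule.mem_inf.mp hm
  rw [LinearMap.IsIdempotentElem.mem_range_iff hP.isIdempotentElem] at hPm
  rw [LinearMap.IsIdempotentElem.mem_range_iff hQ.isIdempotentElem] at hQm
  have hGm : G ((2 : ℝ) • m) = m := by
    simpa [hPm, hQm, two_smul] using
      LinearMap.congr_fun (pinv_comp_add_comp_eq_right hP hQ hG) m
  rw [hQm, ← map_smul, ← map_smul, hGm, hPm]

end ParallelSum

end Operators

theorem parallelSum_of_projections {W : Type*} [NormedAddCommGroup W] [InnerProductSpace ℝ W]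
    [FiniteDimensional ℝ W] (P Q : W →ₗ[ℝ] W)
    (hP : P.IsSymmetric) (hQ : Q.IsSymmetric)
    (hP2 : P ∘ₗ P = P) (hQ2 : Q ∘ₗ Q = Q)
    (G : W →ₗ[ℝ] W) (hG : IsMoorePenrose (P + Q) G) :
    ∀ w : W, ((2 : ℝ) • (P ∘ₗ (G ∘ₗ Q))) w =
      (Submodule.orthogonalProjectionOnto (LinearMap.range P ⊓ LinearMap.range Q) w : W) := by
  have hPproj : P.IsSymmetricProjection := ⟨hP2, hP⟩
  have hQproj : Q.IsSymmetricProjection := ⟨hQ2, hQ⟩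
  intro w
  rw [← Submodule.starProjection_apply]
  exact Submodule.eq_starProjection_of_isSymmetric
    ((isSymmetric_comp_pinv_comp hPproj hQproj hG).smul (by simp))
    (fun v => Submodule.smul_mem _ _ (comp_pinv_comp_apply_mem_inf hPproj hQproj hG v))
    (fun m hm => two_smul_comp_pinv_comp_apply_of_mem_inf hPproj hQproj hG hm) w
end

section
/- The map α : Upper(n) × Sym(n) → Sym(n), (U, X) ↦ σ(UXU⁻¹), is a group action, i.e. α(I, X) = X and α(U₁, α(U₂, X)) = α(U₁U₂, X), where σ(Y) := Y_l + Y_d + Y_lᵀ extracts the symmetric part determined by the lower triangle. -/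
open Matrix

/-- The projection of `ℝ^{n×n}` onto the symmetric matrices along the strictly
upper triangular matrices: `σ(Y) = Y_l + Y_d + Y_lᵀ`. -/
def sigmaProj {n : ℕ} (Y : Matrix (Fin n) (Fin n) ℝ) : Matrix (Fin n) (Fin n) ℝ :=
  Matrix.of fun i j => if j ≤ i then Y i j else Y j i

lemma sigmaProj_of_symm {n : ℕ} {Y : Matrix (Fin n) (Fin n) ℝ} (h : Yᵀ = Y) :
    sigmaProj Y = Y := by
  ext i j
  simp only [sigmaProj, Matrix.of_apply]
  split_ifs with hij
  · rfl
  · exact (congrFun (congrFun h.symm i) j).symm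

lemma sigmaProj_add_strictUpper {n : ℕ} {Y T : Matrix (Fin n) (Fin n) ℝ}
    (hT : ∀ i j : Fin n, j ≤ i → T i j = 0) :
    sigmaProj (Y + T) = sigmaProj Y := by
  ext i j
  simp only [sigmaProj, Matrix.of_apply, Matrix.add_apply]
  split_ifs with hij
  · rw [hT i j hij, add_zero]
  · rw [hT j i (le_of_lt (lt_of_not_ge hij)), add_zero]

lemma mul_strictUpper_mul {n : ℕ} {U T V : Matrix (Fin n) (Fin n) ℝ}
    (hU : U.BlockTriangular id) (hV : V.BlockTriangular id)
    (hT : ∀ i j : Fin n, j ≤ i → T i j = 0) :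
    ∀ i j : Fin n, j ≤ i → (U * T * V) i j = 0 := by
  intro i j hij
  rw [Matrix.mul_apply]
  apply Finset.sum_eq_zero
  intro l _
  rcases le_or_gt l j with hl | hl
  · have : (U * T) i l = 0 := by
      simp only [Matrix.mul_apply]
      apply Finset.sum_eq_zero
      intro k _
      rcases le_or_gt l k with hk | hk
      · rw [hT k l hk, mul_zero]
      · have : (k : Fin n) < i := lt_of_lt_of_le hk (le_trans hl hij)
        rw [hU this, zero_mul]
    rw [this, zero_mul]
  · rw [hV hl, mul_zero]

theorem alpha_group_action {n : ℕ} (U₁ U₂ X : Matrix (Fin n) (Fin n) ℝ)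
    (hX : Xᵀ = X)
    (h₁ : U₁.BlockTriangular id) (h₂ : U₂.BlockTriangular id)
    (hu₁ : IsUnit U₁.det) (hu₂ : IsUnit U₂.det) :
    sigmaProj ((1 : Matrix (Fin n) (Fin n) ℝ) * X * (1 : Matrix (Fin n) (Fin n) ℝ)⁻¹) = X ∧
    sigmaProj (U₁ * sigmaProj (U₂ * X * U₂⁻¹) * U₁⁻¹) =
      sigmaProj ((U₁ * U₂) * X * (U₁ * U₂)⁻¹) := by
  constructor
  · rw [inv_one, one_mul, mul_one, sigmaProj_of_symm hX]
  · have hinv₁ : (U₁⁻¹).BlockTriangular id := by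
      have := U₁.invertibleOfIsUnitDet hu₁
      exact Matrix.blockTriangular_inv_of_blockTriangular h₁
    set Z := U₂ * X * U₂⁻¹ with hZ
    set T := sigmaProj Z - Z with hTdef
    have hT : ∀ i j : Fin n, j ≤ i → T i j = 0 := by
      intro i j hij
      simp [hTdef, sigmaProj, Matrix.sub_apply, hij]
    have hσZ : sigmaProj Z = Z + T := by simp [hTdef]
    have key : U₁ * sigmaProj Z * U₁⁻¹ = U₁ * Z * U₁⁻¹ + U₁ * T * U₁⁻¹ := by
      rw [hσZ]; noncomm_ring
    rw [key, sigmaProj_add_strictUpper (mul_strictUpper_mul h₁ hinv₁ hT)]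
    congr 1
    rw [hZ, Matrix.mul_inv_rev]
    noncomm_ring
end

section
/- A symmetric matrix E is an equilibrium point of the double-bracket flow X' = [[D,X],X] if and only if E commutes with D; moreover along any solution X(t), the function f(X) = (1/2)⟨X−D, X−D⟩ (Frobenius inner product) satisfies d/dt f(X(t)) = −⟨[D,X],[D,X]⟩ ≤ 0. -/
/-! Everything reduces to `tr([A,B] C) = tr(A [B,C])`. For symmetric `D, E` the commutator
`K = [D,E]` is antisymmetric, so `‖K‖² = tr(K Kᵀ) = tr([K,E] D)` and `[K,E] = 0` forces `K = 0`.
Along the flow, `X' = [K,X]` with `K = [D,X]` is symmetric, so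
`d/dt ½‖X - D‖² = tr([K,X] (X - D)) = tr([K,X] X) - tr([K,X] D) = 0 - ‖K‖²`. -/

open Matrix

section Commutator

variable {ι R : Type*} [Fintype ι] [CommRing R]

theorem Matrix.trace_commutator_mul (A B C : Matrix ι ι R) :
    trace ((A * B - B * A) * C) = trace (A * (B * C - C * B)) := by
  simp only [Matrix.sub_mul, Matrix.mul_sub, trace_sub, Matrix.mul_assoc]
  rw [trace_mul_comm B (A * C), Matrix.mul_assoc]

theorem Matrix.trace_commutator_mul_right_self (A B : Matrix ι ι R) :
    trace ((A * B - B * A) * B) = 0 := by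
  rw [trace_commutator_mul, sub_self, Matrix.mul_zero, trace_zero]

theorem Matrix.trace_commutator_mul_transpose_self {D E : Matrix ι ι R} (hD : Dᵀ = D)
    (hE : Eᵀ = E) :
    trace ((D * E - E * D) * (D * E - E * D)ᵀ) =
      trace (((D * E - E * D) * E - E * (D * E - E * D)) * D) := by
  rw [trace_commutator_mul (D * E - E * D) E D, transpose_sub, transpose_mul, transpose_mul, hD, hE]

end Commutator

section Frobenius

variable {m n : Type*} [Fintype m] [Fintype n]

theorem Matrix.trace_mul_transpose_self_nonneg (A : Matrix m n ℝ) : 0 ≤ trace (A * Aᵀ) := by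
  simpa only [conjTranspose_eq_transpose_of_trivial] using
    (posSemidef_self_mul_conjTranspose A).trace_nonneg

theorem Matrix.trace_mul_transpose_self_eq_zero_iff {A : Matrix m n ℝ} :
    trace (A * Aᵀ) = 0 ↔ A = 0 := by
  simpa only [conjTranspose_eq_transpose_of_trivial] using
    trace_mul_conjTranspose_self_eq_zero_iff (A := A)

theorem Matrix.hasDerivAt_trace_mul_transpose_self {X : ℝ → Matrix m n ℝ} {X' : Matrix m n ℝ}
    {t : ℝ} (hX : ∀ i j, HasDerivAt (fun s => X s i j) (X' i j) t) :
    HasDerivAt (fun s => trace (X s * (X s)ᵀ)) (2 * trace (X t * X'ᵀ)) t := by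
  simp only [← sum_hadamard_eq, hadamard_apply, Finset.mul_sum]
  exact HasDerivAt.fun_sum fun i _ => HasDerivAt.fun_sum fun j _ =>
    ((hX i j).mul (hX i j)).congr_deriv (by ring)

end Frobenius

section DoubleBracket

variable {ι : Type*} [Fintype ι] {D : Matrix ι ι ℝ}

theorem doubleBracket_eq_zero_iff_commute (hD : Dᵀ = D) {E : Matrix ι ι ℝ} (hE : Eᵀ = E) :
    (D * E - E * D) * E - E * (D * E - E * D) = 0 ↔ D * E = E * D := by
  constructor
  · intro h
    rw [← sub_eq_zero, ← trace_mul_transpose_self_eq_zero_iff,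
      trace_commutator_mul_transpose_self hD hE, h, Matrix.zero_mul, trace_zero]
  · intro h
    rw [h, sub_self, Matrix.zero_mul, Matrix.mul_zero, sub_zero]

theorem trace_sub_mul_transpose_doubleBracket (hD : Dᵀ = D) {X : Matrix ι ι ℝ} (hX : Xᵀ = X) :
    trace ((X - D) * ((D * X - X * D) * X - X * (D * X - X * D))ᵀ) =
      -trace ((D * X - X * D) * (D * X - X * D)ᵀ) := by
  set K := D * X - X * D
  have hK : Kᵀ = -K := by
    simp only [K, transpose_sub, transpose_mul, hD, hX, neg_sub]
  have hW : (K * X - X * K)ᵀ = K * X - X * K := by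
    simp only [transpose_sub, transpose_mul, hK, hX, Matrix.mul_neg, Matrix.neg_mul, sub_neg_eq_add,
      neg_add_eq_sub]
  rw [hW, trace_mul_comm, Matrix.mul_sub, trace_sub, trace_commutator_mul_right_self,
    trace_commutator_mul_transpose_self hD hX, zero_sub]

end DoubleBracket

theorem doubleBracket_equilibria_and_descent {n : ℕ}
    (D : Matrix (Fin n) (Fin n) ℝ) (hD : Dᵀ = D) :
    (∀ E : Matrix (Fin n) (Fin n) ℝ, Eᵀ = E →
      ((D * E - E * D) * E - E * (D * E - E * D) = 0 ↔ D * E = E * D)) ∧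
    (∀ X : ℝ → Matrix (Fin n) (Fin n) ℝ, ∀ t : ℝ,
      (∀ s, (X s)ᵀ = X s) →
      (∀ i j, HasDerivAt (fun s => X s i j)
        (((D * X t - X t * D) * X t - X t * (D * X t - X t * D)) i j) t) →
      HasDerivAt (fun s => (1 / 2 : ℝ) * Matrix.trace ((X s - D) * (X s - D)ᵀ))
        (-(Matrix.trace ((D * X t - X t * D) * (D * X t - X t * D)ᵀ))) t ∧
      -(Matrix.trace ((D * X t - X t * D) * (D * X t - X t * D)ᵀ)) ≤ 0) := by
  refine ⟨fun E hE => doubleBracket_eq_zero_iff_commute hD hE, fun X t hX hflow => ⟨?_, ?_⟩⟩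
  · have hf := (hasDerivAt_trace_mul_transpose_self (X := fun s => X s - D)
      fun i j => (hflow i j).sub_const (D i j)).const_mul (1 / 2 : ℝ)
    rw [trace_sub_mul_transpose_doubleBracket hD (hX t)] at hf
    exact hf.congr_deriv (by ring)
  · exact neg_nonpos.mpr (trace_mul_transpose_self_nonneg _)
end

section
/- Let E be the 3×3 symmetric matrix with E(1,2)=E(2,1)=a, E(2,3)=E(3,2)=b and all other entries zero, where a, b are nonzero reals. Then E has eigenvalues 0, √(a²+b²), and −√(a²+b²); moreover, setting D := (z/2)·diag(a², a²+b², b²) and λ := −E + zE² − D for any real z, one has [λ + D, E] = 0 and m(λ + E − D) = 0, where m is the projection onto the nonzero pattern Δ of E (the entries (1,1),(2,2),(3,3),(1,2),(2,1),(2,3),(3,2)). -/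
open Matrix

theorem shader_counterexample (a b z : ℝ) (ha : a ≠ 0) (hb : b ≠ 0) :
    let E : Matrix (Fin 3) (Fin 3) ℝ := !![0, a, 0; a, 0, b; 0, b, 0]
    let D : Matrix (Fin 3) (Fin 3) ℝ := (z / 2) • !![a ^ 2, 0, 0; 0, a ^ 2 + b ^ 2, 0; 0, 0, b ^ 2]
    let lam : Matrix (Fin 3) (Fin 3) ℝ := -E + z • (E * E) - D
    let Δ : Finset (Fin 3 × Fin 3) := {(0, 0), (1, 1), (2, 2), (0, 1), (1, 0), (1, 2), (2, 1)}
    let m : Matrix (Fin 3) (Fin 3) ℝ → Matrix (Fin 3) (Fin 3) ℝ :=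
      fun Y => Matrix.of fun i j => if (i, j) ∈ Δ then Y i j else 0
    (∃ v : Fin 3 → ℝ, v ≠ 0 ∧ E.mulVec v = (0 : ℝ) • v) ∧
    (∃ v : Fin 3 → ℝ, v ≠ 0 ∧ E.mulVec v = Real.sqrt (a ^ 2 + b ^ 2) • v) ∧
    (∃ v : Fin 3 → ℝ, v ≠ 0 ∧ E.mulVec v = (-Real.sqrt (a ^ 2 + b ^ 2)) • v) ∧
    (lam + D) * E - E * (lam + D) = 0 ∧
    m (lam + E - D) = 0 := by
  intro E D lam Δ m
  have hs : Real.sqrt (a ^ 2 + b ^ 2) ^ 2 = a ^ 2 + b ^ 2 :=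
    Real.sq_sqrt (by positivity)
  set s := Real.sqrt (a ^ 2 + b ^ 2) with hsdef
  have hEE : E * E = !![a ^ 2, 0, a * b; 0, a ^ 2 + b ^ 2, 0; a * b, 0, b ^ 2] := by
    ext i j
    fin_cases i <;> fin_cases j <;>
      simp [E, Matrix.mul_apply, Fin.sum_univ_three] <;> ring
  have hLD : lam + D = -E + z • (E * E) := by
    show -E + z • (E * E) - D + D = _
    abel
  refine ⟨⟨![b, 0, -a], ?_, ?_⟩, ⟨![a, s, b], ?_, ?_⟩, ⟨![a, -s, b], ?_, ?_⟩, ?_, ?_⟩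
  · intro h; exact hb (by simpa using congrFun h 0)
  · funext i; fin_cases i <;>
      simp [E, mulVec, dotProduct, Fin.sum_univ_three] <;> ring
  · intro h; exact ha (by simpa using congrFun h 0)
  · funext i; fin_cases i <;>
      simp [E, mulVec, dotProduct, Fin.sum_univ_three] <;> nlinarith [hs]
  · intro h; exact ha (by simpa using congrFun h 0)
  · funext i; fin_cases i <;>
      simp [E, mulVec, dotProduct, Fin.sum_univ_three] <;> nlinarith [hs]
  · rw [hLD]
    noncomm_ring
  · have hX : lam + E - D = z • (E * E) - (2 : ℝ) • D := by
      show -E + z • (E * E) - D + E - D = _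
      have : ((2 : ℝ) • D) = D + D := two_smul ℝ D
      rw [this]; abel
    show m (lam + E - D) = 0
    rw [hX, hEE]
    ext i j
    fin_cases i <;> fin_cases j <;>
      simp [m, D, Δ] <;> ring
end
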